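/- arXiv:0906.3139 — 2 statements merged into one kernel-verified Lean document; each statement's English description precedes it below -/
import Mathlib

section
/- Let Φ : ℂ → ℝ be a positive, continuous and bounded function and let M := sup_{w∈ℂ} Φ(w). Then every subsolution f for Φ satisfies |f'(z)| ≤ M for all z in the unit disk 𝔻; consequently every subsolution extends to a Lipschitz continuous function on the closed unit disk (with Lipschitz constant M independent of f), and the family A_Φ of all subsolutions is uniformly bounded on the closed unit disk and equicontinuous at every point of the closed unit disk. -/
open Complex Filter Set Metric MeasureTheory

noncomputable section

/-- The class `H₀(𝔻)`: holomorphic on the unit disk, `f 0 = 0`, `f'(0)` real and positive. -/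
def MemH0 (f : ℂ → ℂ) : Prop :=
  DifferentiableOn ℂ f (Metric.ball (0 : ℂ) 1) ∧ f 0 = 0 ∧
    0 < (deriv f 0).re ∧ (deriv f 0).im = 0

/-- The filter of points `z` of the unit disk with `|z| → 1`. -/
def toBoundary : Filter ℂ := Filter.comap (fun z : ℂ => ‖z‖) (nhdsWithin 1 (Set.Iio 1))

/-- `f` is a subsolution for `Φ`: `limsup_{|z|→1} (|f'(z)| - Φ(f(z))) ≤ 0`. -/
def IsSubsolution (Φ : ℂ → ℝ) (f : ℂ → ℂ) : Prop :=
  MemH0 f ∧ ∀ ε > 0, ∀ᶠ z in toBoundary, ‖deriv f z‖ - Φ (f z) < ε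

/-! Since `Φ ≤ M`, the boundary condition gives `limsup_{|z|→1} |f'(z)| ≤ M`, and the maximum
modulus principle for the holomorphic `f'` on the discs `|z| < r`, `r → 1`, yields `|f'| ≤ M` on
`𝔻`. The mean value inequality on the convex disk makes every subsolution `M`-Lipschitz there, and
a Lipschitz map into a complete space extends with the same constant to the closure. Together with
`f 0 = 0`, the common Lipschitz constant gives the uniform bound and the equicontinuity. -/

open scoped NNReal Topology

theorem UniformContinuousOn.cauchy_map {α β : Type*} [UniformSpace α] [UniformSpace β]
    {f : α → β} {s : Set α} {l : Filter α} (hf : UniformContinuousOn f s) (hl : Cauchy l)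
    (hs : s ∈ l) : Cauchy (map f l) := by
  refine ⟨hl.1.map f, ?_⟩
  rw [prod_map_map_eq]
  exact hf.mono_left (le_inf hl.2 (le_principal_iff.2 (prod_mem_prod hs hs)))

theorem LipschitzOnWith.exists_extension_closure {α β : Type*} [PseudoEMetricSpace α]
    [EMetricSpace β] [CompleteSpace β] {f : α → β} {s : Set α} {K : ℝ≥0}
    (hf : LipschitzOnWith K f s) : ∃ F : α → β, EqOn F f s ∧ LipschitzOnWith K F (closure s) := by
  have hlim : ∀ x ∈ closure s, ∃ y, Tendsto f (𝓝[s] x) (𝓝 y) := fun x hx =>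
    haveI := mem_closure_iff_nhdsWithin_neBot.1 hx
    cauchy_map_iff_exists_tendsto.1
      (hf.uniformContinuousOn.cauchy_map (cauchy_nhds.mono inf_le_left) self_mem_nhdsWithin)
  have hext : EqOn (extendFrom s f) f s := extendFrom_extends hf.continuousOn
  have hlip : LipschitzOnWith K (extendFrom s f) s := fun x hx y hy => by
    rw [hext hx, hext hy]
    exact hf hx hy
  exact ⟨extendFrom s f, hext, hlip.closure (continuousOn_extendFrom subset_rfl hlim)⟩

theorem eventually_toBoundary_iff {p : ℂ → Prop} :
    (∀ᶠ z in toBoundary, p z) ↔ ∃ l < 1, ∀ z : ℂ, ‖z‖ ∈ Ioo l 1 → p z := by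
  rw [toBoundary, eventually_comap, eventually_iff, mem_nhdsLT_iff_exists_Ioo_subset]
  simp only [subset_def, mem_ofPred_eq]
  exact ⟨fun ⟨l, hl, h⟩ => ⟨l, hl, fun z hz => h _ hz z rfl⟩,
    fun ⟨l, hl, h⟩ => ⟨l, hl, fun _ hx z hz => h z (hz ▸ hx)⟩⟩

theorem norm_le_of_eventually_toBoundary_norm_le {F : Type*} [NormedAddCommGroup F]
    [NormedSpace ℂ F] {g : ℂ → F} {M : ℝ} (hg : DifferentiableOn ℂ g (ball 0 1))
    (hbd : ∀ ε > 0, ∀ᶠ z in toBoundary, ‖g z‖ ≤ M + ε) {z : ℂ} (hz : z ∈ ball 0 1) :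
    ‖g z‖ ≤ M := by
  refine le_of_forall_pos_le_add fun ε hε => ?_
  obtain ⟨l, hl, hg_le⟩ := eventually_toBoundary_iff.1 (hbd ε hε)
  obtain ⟨r, hr, hr1⟩ := exists_between (max_lt hl (mem_ball_zero_iff.1 hz))
  have hr0 : 0 < r := (norm_nonneg z).trans_lt ((le_max_right _ _).trans_lt hr)
  have hcl : closure (ball (0 : ℂ) r) ⊆ ball 0 1 := by
    rw [closure_ball _ hr0.ne']
    exact closedBall_subset_ball hr1
  refine Complex.norm_le_of_forall_mem_frontier_norm_le isBounded_ball (hg.mono hcl).diffContOnCl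
    ?_ (subset_closure (mem_ball_zero_iff.2 ((le_max_right _ _).trans_lt hr)))
  intro w hw
  rw [frontier_ball _ hr0.ne', mem_sphere_zero_iff_norm] at hw
  exact hg_le w (hw ▸ ⟨(le_max_left _ _).trans_lt hr, hr1⟩)

namespace IsSubsolution

variable {Φ : ℂ → ℝ} {f : ℂ → ℂ} {M : ℝ}

theorem norm_deriv_le (hf : IsSubsolution Φ f) (hΦ : ∀ w, Φ w ≤ M) {z : ℂ}
    (hz : z ∈ ball 0 1) : ‖deriv f z‖ ≤ M :=
  norm_le_of_eventually_toBoundary_norm_le (hf.1.1.analyticOnNhd isOpen_ball).deriv.differentiableOn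
    (fun ε hε => (hf.2 ε hε).mono fun w hw => by linarith [hΦ (f w)]) hz

theorem lipschitzOnWith (hf : IsSubsolution Φ f) (hΦ : ∀ w, Φ w ≤ M) :
    LipschitzOnWith M.toNNReal f (ball 0 1) :=
  (convex_ball 0 1).lipschitzOnWith_of_nnnorm_deriv_le
    (fun _ hz => hf.1.1.differentiableAt (isOpen_ball.mem_nhds hz))
    fun _ hz => NNReal.le_toNNReal_of_coe_le (hf.norm_deriv_le hΦ hz)

end IsSubsolution

theorem subsolutions_deriv_bound_lipschitz_equicontinuous_general (Φ : ℂ → ℝ)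
    (hbdd : BddAbove (Set.range Φ))
    (M : ℝ) (hM : M = sSup (Set.range Φ)) :
    (∀ f : ℂ → ℂ, IsSubsolution Φ f → ∀ z ∈ Metric.ball (0 : ℂ) 1,
        ‖deriv f z‖ ≤ M) ∧
    (∀ f : ℂ → ℂ, IsSubsolution Φ f → ∃ F : ℂ → ℂ,
        Set.EqOn F f (Metric.ball (0 : ℂ) 1) ∧
        LipschitzOnWith (Real.toNNReal M) F (Metric.closedBall (0 : ℂ) 1)) ∧
    (∃ C : ℝ, ∀ f : ℂ → ℂ, IsSubsolution Φ f → ∀ z ∈ Metric.ball (0 : ℂ) 1,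
        ‖f z‖ ≤ C) ∧
    (∀ z₀ ∈ Metric.closedBall (0 : ℂ) 1, ∀ ε > (0 : ℝ), ∃ δ > (0 : ℝ),
        ∀ f : ℂ → ℂ, IsSubsolution Φ f →
          ∀ z₁ ∈ Metric.ball (0 : ℂ) 1, ∀ z₂ ∈ Metric.ball (0 : ℂ) 1,
            dist z₁ z₀ < δ → dist z₂ z₀ < δ → dist (f z₁) (f z₂) < ε) := by
  have hΦ : ∀ w, Φ w ≤ M := fun w => hM ▸ le_csSup hbdd ⟨w, rfl⟩
  set K := M.toNNReal
  have hlip : ∀ f, IsSubsolution Φ f → LipschitzOnWith K f (ball 0 1) :=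
    fun f hf => hf.lipschitzOnWith hΦ
  refine ⟨fun f hf z hz => hf.norm_deriv_le hΦ hz, fun f hf => ?_, ⟨K, fun f hf z hz => ?_⟩, ?_⟩
  · simpa only [closure_ball (0 : ℂ) one_ne_zero] using (hlip f hf).exists_extension_closure
  · calc ‖f z‖ = dist (f z) (f 0) := by rw [hf.1.2.1, dist_zero_right]
      _ ≤ K * dist z 0 := (hlip f hf).dist_le_mul z hz 0 (mem_ball_self one_pos)
      _ ≤ K := mul_le_of_le_one_right K.2 (mem_ball.1 hz).le
  · intro z₀ _ ε hε
    refine ⟨ε / (2 * K + 1), by positivity, fun f hf z₁ h₁ z₂ h₂ hd₁ hd₂ => ?_⟩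
    calc dist (f z₁) (f z₂) ≤ K * dist z₁ z₂ := (hlip f hf).dist_le_mul z₁ h₁ z₂ h₂
      _ ≤ K * (2 * (ε / (2 * K + 1))) := by gcongr; linarith [dist_triangle_right z₁ z₂ z₀]
      _ = 2 * K / (2 * K + 1) * ε := by ring
      _ < 1 * ε := by gcongr; rw [div_lt_one (by positivity)]; linarith
      _ = ε := one_mul ε

/-- **Theorem (Lemma on subsolutions, part (a)).**
With `M = sup Φ`, every subsolution satisfies `|f'| ≤ M` on `𝔻`; consequently every subsolution
has a Lipschitz continuous extension to the closed disk with Lipschitz constant `M` (independent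
of `f`), and the family of subsolutions is uniformly bounded on the closed disk and
equicontinuous at every point of the closed disk. -/
theorem subsolutions_deriv_bound_lipschitz_equicontinuous (Φ : ℂ → ℝ)
    (hpos : ∀ w, 0 < Φ w) (hcont : Continuous Φ) (hbdd : BddAbove (Set.range Φ))
    (M : ℝ) (hM : M = sSup (Set.range Φ)) :
    (∀ f : ℂ → ℂ, IsSubsolution Φ f → ∀ z ∈ Metric.ball (0 : ℂ) 1,
        ‖deriv f z‖ ≤ M) ∧
    (∀ f : ℂ → ℂ, IsSubsolution Φ f → ∃ F : ℂ → ℂ,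
        Set.EqOn F f (Metric.ball (0 : ℂ) 1) ∧
        LipschitzOnWith (Real.toNNReal M) F (Metric.closedBall (0 : ℂ) 1)) ∧
    (∃ C : ℝ, ∀ f : ℂ → ℂ, IsSubsolution Φ f → ∀ z ∈ Metric.ball (0 : ℂ) 1,
        ‖f z‖ ≤ C) ∧
    (∀ z₀ ∈ Metric.closedBall (0 : ℂ) 1, ∀ ε > (0 : ℝ), ∃ δ > (0 : ℝ),
        ∀ f : ℂ → ℂ, IsSubsolution Φ f →
          ∀ z₁ ∈ Metric.ball (0 : ℂ) 1, ∀ z₂ ∈ Metric.ball (0 : ℂ) 1,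
            dist z₁ z₀ < δ → dist z₂ z₀ < δ → dist (f z₁) (f z₂) < ε) :=
  subsolutions_deriv_bound_lipschitz_equicontinuous_general Φ hbdd M hM
end
end

section
/- Let Φ : ℂ → ℝ be a positive, continuous and bounded function and let f ∈ H₀(𝔻) have a continuous extension to the closed unit disk. Then f is a subsolution for Φ if and only if for every z in the unit disk, log |f'(z)| ≤ (1/2π) ∫₀^{2π} P(z, e^{it}) · log Φ(f(e^{it})) dt, where P(z, e^{it}) = Re((e^{it}+z)/(e^{it}−z)) is the Poisson kernel. -/
open Complex Filter Set Metric MeasureTheory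

noncomputable section

/-- Poisson kernel `P(z, e^{it}) = Re((e^{it}+z)/(e^{it}-z))`. -/
def poissonKer (z : ℂ) (t : ℝ) : ℝ :=
  ((Complex.exp (t * Complex.I) + z) / (Complex.exp (t * Complex.I) - z)).re

/-!
Let `u` be the Poisson integral of `log Φ ∘ F`. It is the real part of a holomorphic function `H`
on the disk, and `u z - log Φ (F z) → 0` as `|z| → 1`: `log Φ ∘ F` is uniformly continuous on
the closed disk, and away from a `δ`-neighbourhood of `z` the Poisson kernel at `z` is at most
`(1 - |z|²) / δ²`. So `f` is a subsolution iff `limsup_{|z|→1} (|f'(z)| - exp (u z)) ≤ 0`.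
Since `f' · exp (-H)` is holomorphic with `|f' · exp (-H)| = |f'| / exp u`, the maximum modulus
principle makes this equivalent to `|f'| ≤ exp u` on the whole disk.
-/

open Topology

lemma forall_eventually_sub_lt_iff_of_tendsto_sub {α : Type*} {l : Filter α} {a b c : α → ℝ}
    (h : Tendsto (fun x ↦ c x - b x) l (𝓝 0)) :
    (∀ ε > 0, ∀ᶠ x in l, a x - b x < ε) ↔ ∀ ε > 0, ∀ᶠ x in l, a x - c x < ε := by
  constructor <;> intro hab ε hε <;>
    filter_upwards [hab (ε / 2) (by positivity), Metric.tendsto_nhds.mp h (ε / 2) (by positivity)]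
      with x hx hcb <;>
    · rw [Real.dist_eq, sub_zero, abs_lt] at hcb
      linarith

lemma tendsto_exp_sub_exp {α : Type*} {l : Filter α} {u v : α → ℝ} {M : ℝ}
    (h : Tendsto (fun x ↦ u x - v x) l (𝓝 0)) (hv : ∀ᶠ x in l, v x ≤ M) :
    Tendsto (fun x ↦ Real.exp (u x) - Real.exp (v x)) l (𝓝 0) := by
  have hexp : Tendsto (fun x ↦ Real.exp (u x - v x) - 1) l (𝓝 0) := by
    simpa using ((Real.continuous_exp.tendsto 0).comp h).sub_const 1
  have hbdd : IsBoundedUnder (· ≤ ·) l ((‖·‖) ∘ fun x ↦ Real.exp (v x)) :=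
    isBoundedUnder_of_eventually_le (a := Real.exp M) <| hv.mono fun x hx ↦ by
      simpa using Real.exp_le_exp.mpr hx
  refine (hexp.zero_mul_isBoundedUnder_le hbdd).congr fun x ↦ ?_
  rw [sub_mul, ← Real.exp_add, sub_add_cancel, one_mul]

lemma tendsto_norm_toBoundary : Tendsto (‖·‖) toBoundary (𝓝[<] 1) :=
  tendsto_comap

lemma eventually_mem_ball_toBoundary : ∀ᶠ z in toBoundary, z ∈ ball (0 : ℂ) 1 := by
  simpa using tendsto_norm_toBoundary.eventually self_mem_nhdsWithin

lemma norm_le_of_forall_eventually_norm_lt {h : ℂ → ℂ} {C : ℝ}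
    (hd : DifferentiableOn ℂ h (ball 0 1))
    (hb : ∀ ε > 0, ∀ᶠ z in toBoundary, ‖h z‖ < C + ε) :
    ∀ z ∈ ball (0 : ℂ) 1, ‖h z‖ ≤ C := by
  intro z hz
  rw [mem_ball_zero_iff] at hz
  refine le_of_forall_pos_le_add fun ε hε ↦ ?_
  obtain ⟨ρ, hρ, hzρ, hρ1⟩ := ((eventually_comap.mp (hb ε hε)).and (Ioo_mem_nhdsLT hz)).exists
  refine Complex.norm_le_of_forall_mem_frontier_norm_le isBounded_ball
    (hd.diffContOnCl_ball (closedBall_subset_ball hρ1)) (fun w hw ↦ ?_)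
    (subset_closure (mem_ball_zero_iff.mpr hzρ))
  exact (hρ w (by simpa using frontier_ball_subset_sphere hw)).le

lemma forall_eventually_norm_sub_exp_lt_iff {φ H : ℂ → ℂ} {u : ℂ → ℝ} {K : ℝ}
    (hφ : DifferentiableOn ℂ φ (ball 0 1)) (hH : DifferentiableOn ℂ H (ball 0 1))
    (hHu : ∀ z ∈ ball (0 : ℂ) 1, (H z).re = u z) (hK : ∀ᶠ z in toBoundary, K ≤ u z) :
    (∀ ε > 0, ∀ᶠ z in toBoundary, ‖φ z‖ - Real.exp (u z) < ε) ↔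
      ∀ z ∈ ball (0 : ℂ) 1, ‖φ z‖ ≤ Real.exp (u z) := by
  have hnorm : ∀ z ∈ ball (0 : ℂ) 1, ‖φ z * exp (-H z)‖ = ‖φ z‖ / Real.exp (u z) := by
    intro z hz
    rw [norm_mul, norm_exp, neg_re, hHu z hz, Real.exp_neg, div_eq_mul_inv]
  constructor
  · intro hsub
    have hbound : ∀ z ∈ ball (0 : ℂ) 1, ‖φ z * exp (-H z)‖ ≤ 1 := by
      refine norm_le_of_forall_eventually_norm_lt (hφ.mul hH.neg.cexp) fun ε hε ↦ ?_
      filter_upwards [hsub (ε * Real.exp K) (by positivity), hK, eventually_mem_ball_toBoundary]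
        with z hφz hKz hz
      rw [hnorm z hz, div_lt_iff₀ (Real.exp_pos _)]
      nlinarith [Real.exp_le_exp.mpr hKz]
    intro z hz
    have := hbound z hz
    rwa [hnorm z hz, div_le_one (Real.exp_pos _)] at this
  · intro hle ε hε
    filter_upwards [eventually_mem_ball_toBoundary] with z hz
    linarith [hle z hz]

def poissonIntegral (g : ℂ → ℝ) (z : ℂ) : ℝ :=
  Real.circleAverage (poissonKernel 0 z • g) 0 1

lemma poissonKer_eq_poissonKernel (z : ℂ) (t : ℝ) :
    poissonKer z t = poissonKernel 0 z (exp (t * I)) := by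
  simp [poissonKer, poissonKernel_eq_re_herglotzRieszKernel, herglotzRieszKernel_def]

lemma poissonIntegral_eq_integral (g : ℂ → ℝ) (z : ℂ) :
    poissonIntegral g z =
      1 / (2 * Real.pi) * ∫ t in (0 : ℝ)..(2 * Real.pi), poissonKer z t * g (exp (t * I)) := by
  simp [poissonIntegral, Real.circleAverage_def, circleMap_zero, poissonKer_eq_poissonKernel]

lemma continuousOn_poissonKernel_sphere {z : ℂ} (hz : z ∈ ball (0 : ℂ) 1) :
    ContinuousOn (poissonKernel 0 z) (sphere 0 1) := by
  rw [poissonKernel_eq_re_herglotzRieszKernel]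
  exact continuous_re.comp_continuousOn (by simpa using continuousOn_herglotzRieszKernel_sphere hz)

lemma poissonKernel_nonneg {z ζ : ℂ} (hz : z ∈ ball (0 : ℂ) 1) (hζ : ζ ∈ sphere (0 : ℂ) 1) :
    0 ≤ poissonKernel 0 z ζ := by
  rw [mem_ball_zero_iff] at hz
  rw [mem_sphere_zero_iff_norm] at hζ
  rw [poissonKernel_def, sub_zero, sub_zero, hζ]
  have : ‖z‖ ^ 2 ≤ 1 := by nlinarith [norm_nonneg z]
  exact div_nonneg (by linarith) (sq_nonneg _)

lemma poissonKernel_le {z ζ : ℂ} {δ : ℝ} (hz : z ∈ ball (0 : ℂ) 1) (hζ : ζ ∈ sphere (0 : ℂ) 1)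
    (hδ : 0 < δ) (hδζ : δ ≤ ‖ζ - z‖) :
    poissonKernel 0 z ζ ≤ (1 - ‖z‖ ^ 2) / δ ^ 2 := by
  rw [mem_ball_zero_iff] at hz
  rw [mem_sphere_zero_iff_norm] at hζ
  rw [poissonKernel_def, sub_zero, sub_zero, hζ, one_pow]
  have : ‖z‖ ^ 2 ≤ 1 := by nlinarith [norm_nonneg z]
  gcongr

lemma circleAverage_poissonKernel {z : ℂ} (hz : z ∈ ball (0 : ℂ) 1) :
    Real.circleAverage (poissonKernel 0 z) 0 1 = 1 := by
  simpa [Pi.mul_def] using (InnerProductSpace.harmonicOnNhd_const (1 : ℝ)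
    (s := closedBall 0 1)).circleAverage_poissonKernel_smul hz

lemma exists_differentiableOn_re_eq_poissonIntegral {g : ℂ → ℝ}
    (hg : ContinuousOn g (sphere 0 1)) :
    ∃ H : ℂ → ℂ, DifferentiableOn ℂ H (ball 0 1) ∧
      ∀ z ∈ ball (0 : ℂ) 1, (H z).re = poissonIntegral g z := by
  refine ⟨fun z ↦ Real.circleAverage (fun ζ ↦ herglotzRieszKernel 0 z ζ • (g ζ : ℂ)) 0 1,
    differentiableOn_circleAverage_herglotzRieszKernel_smul
      ((continuous_ofReal.comp_continuousOn hg).circleIntegrable zero_le_one), fun z hz ↦ ?_⟩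
  rw [re_circleAverage_herglotzRieszKernel_smul (hg.circleIntegrable zero_le_one) hz,
    ← poissonKernel_eq_re_herglotzRieszKernel, poissonIntegral]

lemma abs_poissonIntegral_sub_le {g : ℂ → ℝ} {z : ℂ} {ε δ C : ℝ}
    (hg : ContinuousOn g (sphere 0 1)) (hz : z ∈ ball (0 : ℂ) 1) (hε : 0 ≤ ε) (hδ : 0 < δ)
    (hnear : ∀ ζ ∈ sphere (0 : ℂ) 1, ‖ζ - z‖ < δ → |g ζ - g z| ≤ ε)
    (hfar : ∀ ζ ∈ sphere (0 : ℂ) 1, |g ζ - g z| ≤ C) :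
    |poissonIntegral g z - g z| ≤ ε + C * (1 - ‖z‖ ^ 2) / δ ^ 2 := by
  set P := poissonKernel 0 z
  have hP : ContinuousOn P (sphere 0 1) := continuousOn_poissonKernel_sphere hz
  have hint : ∀ {f : ℂ → ℝ}, ContinuousOn f (sphere 0 1) → CircleIntegrable f 0 1 :=
    fun hf ↦ hf.circleIntegrable zero_le_one
  have hK : 0 ≤ C * (1 - ‖z‖ ^ 2) / δ ^ 2 := by
    have hC : 0 ≤ C := (abs_nonneg _).trans (hfar 1 (by simp))
    have : 0 ≤ 1 - ‖z‖ ^ 2 := by nlinarith [norm_nonneg z, mem_ball_zero_iff.mp hz]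
    positivity
  have hsplit : (fun ζ ↦ P ζ * (g ζ - g z)) = fun ζ ↦ P ζ * g ζ - g z • P ζ := by
    ext ζ; rw [smul_eq_mul]; ring
  have hpointwise : ∀ ζ ∈ sphere (0 : ℂ) |1|,
      |P ζ * (g ζ - g z)| ≤ ε • P ζ + C * (1 - ‖z‖ ^ 2) / δ ^ 2 := by
    intro ζ hζ
    rw [abs_one] at hζ
    have hPζ := poissonKernel_nonneg hz hζ
    rw [abs_mul, abs_of_nonneg hPζ, smul_eq_mul]
    rcases lt_or_ge ‖ζ - z‖ δ with hlt | hge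
    · nlinarith [hnear ζ hζ hlt]
    · have hPle := poissonKernel_le hz hζ hδ hge
      have : P ζ * |g ζ - g z| ≤ (1 - ‖z‖ ^ 2) / δ ^ 2 * C :=
        mul_le_mul hPle (hfar ζ hζ) (abs_nonneg _) (hPζ.trans hPle)
      rw [mul_div_assoc]; nlinarith
  calc |poissonIntegral g z - g z|
      = |Real.circleAverage (fun ζ ↦ P ζ * (g ζ - g z)) 0 1| := by
        rw [hsplit, Real.circleAverage_fun_sub (hint (hP.fun_mul hg))
          (hint (hP.fun_const_smul (g z))), Real.circleAverage_fun_smul,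
          circleAverage_poissonKernel hz, smul_eq_mul, mul_one]
        rfl
    _ ≤ Real.circleAverage (fun ζ ↦ |P ζ * (g ζ - g z)|) 0 1 :=
        Real.abs_circleAverage_le_circleAverage_abs
    _ ≤ Real.circleAverage (fun ζ ↦ ε • P ζ + C * (1 - ‖z‖ ^ 2) / δ ^ 2) 0 1 :=
        Real.circleAverage_mono (hint (hP.fun_mul (hg.sub continuousOn_const)).abs)
          (hint ((hP.fun_const_smul ε).add continuousOn_const)) hpointwise
    _ = ε + C * (1 - ‖z‖ ^ 2) / δ ^ 2 := by
        rw [Real.circleAverage_fun_add (hint (hP.fun_const_smul ε)) (hint continuousOn_const),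
          Real.circleAverage_fun_smul, circleAverage_poissonKernel hz, Real.circleAverage_const,
          smul_eq_mul, mul_one]

lemma tendsto_poissonIntegral_sub {g : ℂ → ℝ} (hg : ContinuousOn g (closedBall 0 1)) :
    Tendsto (fun z ↦ poissonIntegral g z - g z) toBoundary (𝓝 0) := by
  rw [Metric.tendsto_nhds]
  intro ε hε
  have hK := isCompact_closedBall (0 : ℂ) 1
  obtain ⟨δ, hδ, hδg⟩ := Metric.uniformContinuousOn_iff.mp
    (hK.uniformContinuousOn_of_continuous hg) (ε / 4) (by positivity)
  obtain ⟨C, hC⟩ := hK.exists_bound_of_continuousOn hg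
  have hsmall : ∀ᶠ z in toBoundary, 2 * C * (1 - ‖z‖ ^ 2) / δ ^ 2 < ε / 2 := by
    have : Tendsto (fun r : ℝ ↦ 2 * C * (1 - r ^ 2) / δ ^ 2) (𝓝[<] 1) (𝓝 0) :=
      tendsto_nhdsWithin_of_tendsto_nhds (Continuous.tendsto' (by fun_prop) 1 0 (by simp))
    exact (this.comp tendsto_norm_toBoundary).eventually (gt_mem_nhds (by positivity))
  filter_upwards [hsmall, eventually_mem_ball_toBoundary] with z hsmall_z hz
  have hz' := ball_subset_closedBall hz
  have hnear : ∀ ζ ∈ sphere (0 : ℂ) 1, ‖ζ - z‖ < δ → |g ζ - g z| ≤ ε / 4 := fun ζ hζ hζz ↦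
    (hδg ζ (sphere_subset_closedBall hζ) z hz' (by rwa [dist_eq_norm])).le
  have hfar : ∀ ζ ∈ sphere (0 : ℂ) 1, |g ζ - g z| ≤ 2 * C := fun ζ hζ ↦
    calc |g ζ - g z| ≤ ‖g ζ‖ + ‖g z‖ := abs_sub _ _
      _ ≤ 2 * C := by linarith [hC ζ (sphere_subset_closedBall hζ), hC z hz']
  have := abs_poissonIntegral_sub_le (hg.mono sphere_subset_closedBall) hz (by positivity) hδ
    hnear hfar
  rw [Real.dist_eq, sub_zero]
  linarith

lemma tendsto_exp_poissonIntegral_sub_exp {g : ℂ → ℝ} (hg : ContinuousOn g (closedBall 0 1)) :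
    Tendsto (fun z ↦ Real.exp (poissonIntegral g z) - Real.exp (g z)) toBoundary (𝓝 0) := by
  obtain ⟨C, hC⟩ := (isCompact_closedBall (0 : ℂ) 1).exists_bound_of_continuousOn hg
  exact tendsto_exp_sub_exp (tendsto_poissonIntegral_sub hg)
    (eventually_mem_ball_toBoundary.mono fun z hz ↦
      (Real.le_norm_self _).trans (hC z (ball_subset_closedBall hz)))

lemma exists_eventually_le_poissonIntegral {g : ℂ → ℝ} (hg : ContinuousOn g (closedBall 0 1)) :
    ∃ K, ∀ᶠ z in toBoundary, K ≤ poissonIntegral g z := by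
  obtain ⟨C, hC⟩ := (isCompact_closedBall (0 : ℂ) 1).exists_bound_of_continuousOn hg
  refine ⟨-C - 1, ?_⟩
  filter_upwards [eventually_mem_ball_toBoundary,
    Metric.tendsto_nhds.mp (tendsto_poissonIntegral_sub hg) 1 one_pos] with z hz hdist
  have hgz := hC z (ball_subset_closedBall hz)
  rw [Real.norm_eq_abs, abs_le] at hgz
  rw [Real.dist_eq, sub_zero, abs_lt] at hdist
  linarith

theorem subsolution_iff_poisson_inequality_general (Φ : ℂ → ℝ)
    (hpos : ∀ w, 0 < Φ w) (hcont : Continuous Φ)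
    (f F : ℂ → ℂ) (hf : MemH0 f)
    (hF : ContinuousOn F (Metric.closedBall (0 : ℂ) 1))
    (hFf : Set.EqOn F f (Metric.ball (0 : ℂ) 1)) :
    IsSubsolution Φ f ↔
      ∀ z ∈ Metric.ball (0 : ℂ) 1,
        ‖deriv f z‖ ≤
          Real.exp ((1 / (2 * Real.pi)) *
            ∫ t in (0 : ℝ)..(2 * Real.pi),
              poissonKer z t * Real.log (Φ (F (Complex.exp (t * Complex.I))))) := by
  have hv : ContinuousOn (fun w ↦ Real.log (Φ (F w))) (closedBall 0 1) :=
    (hcont.comp_continuousOn hF).log fun w _ ↦ (hpos _).ne'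
  simp only [← poissonIntegral_eq_integral (fun w ↦ Real.log (Φ (F w)))]
  obtain ⟨H, hH, hHu⟩ := exists_differentiableOn_re_eq_poissonIntegral
    (hv.mono sphere_subset_closedBall)
  obtain ⟨K, hK⟩ := exists_eventually_le_poissonIntegral hv
  have hboundary : Tendsto (fun z ↦ Real.exp (poissonIntegral (fun w ↦ Real.log (Φ (F w))) z)
      - Φ (f z)) toBoundary (𝓝 0) := by
    refine (tendsto_exp_poissonIntegral_sub_exp hv).congr' ?_
    filter_upwards [eventually_mem_ball_toBoundary] with z hz
    rw [Real.exp_log (hpos _), hFf hz]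
  rw [IsSubsolution, and_iff_right hf, forall_eventually_sub_lt_iff_of_tendsto_sub hboundary]
  exact forall_eventually_norm_sub_exp_lt_iff
    (hf.1.analyticOnNhd isOpen_ball).deriv.differentiableOn hH hHu hK

/-- **Theorem (Lemma on subsolutions, part (b)).**
A function `f ∈ H₀(𝔻)` with a continuous extension `F` to the closed unit disk is a subsolution
for `Φ` if and only if `log |f'(z)| ≤ (1/2π)∫₀^{2π} P(z,e^{it}) log Φ(f(e^{it})) dt` on `𝔻`
(stated equivalently in exponentiated form to accommodate zeros of `f'`). -/
theorem subsolution_iff_poisson_inequality (Φ : ℂ → ℝ)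
    (hpos : ∀ w, 0 < Φ w) (hcont : Continuous Φ) (hbdd : BddAbove (Set.range Φ))
    (f F : ℂ → ℂ) (hf : MemH0 f)
    (hF : ContinuousOn F (Metric.closedBall (0 : ℂ) 1))
    (hFf : Set.EqOn F f (Metric.ball (0 : ℂ) 1)) :
    IsSubsolution Φ f ↔
      ∀ z ∈ Metric.ball (0 : ℂ) 1,
        ‖deriv f z‖ ≤
          Real.exp ((1 / (2 * Real.pi)) *
            ∫ t in (0 : ℝ)..(2 * Real.pi),
              poissonKer z t * Real.log (Φ (F (Complex.exp (t * Complex.I))))) :=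
  subsolution_iff_poisson_inequality_general Φ hpos hcont f F hf hF hFf
end
end
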